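/- Let $p$ be a prime and let $x, y$ be complex numbers with $|x| < 1$. Then $\sum_{e=0}^{\infty} \big( f(e,0,p) + f(e,1,p)\, y + f(e,2,p)\, y^2 \big) x^e = \frac{1}{6} \cdot \frac{(1-y)^2}{(1-x)^2} + \frac{1}{2} \cdot \frac{1-y^2}{1-x^2} + \frac{1}{3} \cdot \frac{1+y+y^2}{1+x+x^2} + \frac{1}{p} \cdot \frac{1-y}{1-x}$, where the series on the left converges absolutely. -/
import Mathlib


/-- τ_e = 1, -1, 0 according as e ≡ 0, 1, 2 (mod 3). -/
noncomputable def tauC (e : ℕ) : ℂ :=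
  if e % 3 = 0 then 1 else if e % 3 = 1 then -1 else 0

/-- f(e,0,p) -/
noncomputable def f0C (e : ℕ) (p : ℕ) : ℂ :=
  ((e : ℂ) + 1)/6 + (1 + (-1 : ℂ)^e)/4 + tauC e/3 + 1/(p : ℂ)

/-- f(e,1,p) -/
noncomputable def f1C (e : ℕ) (p : ℕ) : ℂ :=
  -(((e : ℂ) + 1))/3 + tauC e/3 - 1/(p : ℂ)

/-- f(e,2,p) -/
noncomputable def f2C (e : ℕ) (p : ℕ) : ℂ :=
  ((e : ℂ) + 1)/6 - (1 + (-1 : ℂ)^e)/4 + tauC e/3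

lemma decompC (p : ℕ) (x y : ℂ) (e : ℕ) :
    (f0C e p + f1C e p * y + f2C e p * y ^ 2) * x ^ e
      = (1-y)^2/6 * (((e:ℂ)+1) * x^e) + (1-y^2)/4 * (x^e + (-x)^e)
        + (1+y+y^2)/3 * (tauC e * x^e) + (1-y) * (1/(p:ℂ)) * x^e := by
  have h : (-x)^e = (-1:ℂ)^e * x^e := by rw [neg_pow]
  simp only [f0C, f1C, f2C, h]
  ring

lemma norm_tauC_le (e : ℕ) : ‖tauC e‖ ≤ 1 := by
  unfold tauC
  split_ifs <;> simp

theorem stmt9 (p : ℕ) (hp : p.Prime) (x y : ℂ) (hx : ‖x‖ < 1) :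
    Summable (fun e : ℕ => ‖(f0C e p + f1C e p * y + f2C e p * y ^ 2) * x ^ e‖) ∧
    HasSum (fun e : ℕ => (f0C e p + f1C e p * y + f2C e p * y ^ 2) * x ^ e)
      (1/6 * ((1 - y)^2 / (1 - x)^2) + 1/2 * ((1 - y^2) / (1 - x^2))
        + 1/3 * ((1 + y + y^2) / (1 + x + x^2)) + 1/(p : ℂ) * ((1 - y) / (1 - x))) := by
  have hx3 : ‖x^3‖ < 1 := by
    rw [norm_pow]
    nlinarith [norm_nonneg x, sq_nonneg ‖x‖]
  have hnx : ‖-x‖ < 1 := by rwa [norm_neg]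
  have hpc : (p : ℂ) ≠ 0 := Nat.cast_ne_zero.mpr hp.pos.ne'
  have h1x : (1 : ℂ) - x ≠ 0 := by
    intro h
    have hx1 : x = 1 := by linear_combination -h
    rw [hx1] at hx; simp at hx
  have h1px : (1 : ℂ) + x ≠ 0 := by
    intro h
    have hx1 : x = -1 := by linear_combination h
    rw [hx1] at hx; simp at hx
  have h3x : (1 : ℂ) - x^3 ≠ 0 := by
    intro h
    have hx1 : x^3 = 1 := by linear_combination -h
    rw [hx1] at hx3; simp at hx3
  have hsum3 : (1 : ℂ) + x + x^2 ≠ 0 := by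
    intro h
    exact h3x (by linear_combination (1-x)*h)
  have h2x : (1 : ℂ) - x^2 ≠ 0 := by
    have h : ((1:ℂ)-x)*(1+x) = 1 - x^2 := by ring
    exact h ▸ mul_ne_zero h1x h1px
  -- main HasSum components
  have hS1 : HasSum (fun e : ℕ => ((e:ℂ)+1) * x^e) (x/(1-x)^2 + (1-x)⁻¹) := by
    have h := (hasSum_coe_mul_geometric_of_norm_lt_one hx).add
      (hasSum_geometric_of_norm_lt_one hx)
    have heq : (fun e : ℕ => ((e:ℂ)+1)*x^e) = fun e : ℕ => (e:ℂ)*x^e + x^e := by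
      funext e; ring
    rw [heq]; exact h
  have hS2 : HasSum (fun e : ℕ => x^e + (-x)^e) ((1-x)⁻¹ + (1-(-x))⁻¹) :=
    (hasSum_geometric_of_norm_lt_one hx).add (hasSum_geometric_of_norm_lt_one hnx)
  have hgg : HasSum (fun k : ℕ => (x^3)^k) (1-x^3)⁻¹ := hasSum_geometric_of_norm_lt_one hx3
  have hg1 : HasSum (fun e : ℕ => if e % 3 = 0 then x^e else 0) (1-x^3)⁻¹ := by
    have hinj : Function.Injective (fun k : ℕ => 3*k) := fun a b h => by dsimp only at h; omega
    rw [← Function.Injective.hasSum_iff hinj ?_]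
    · have heq : ((fun e : ℕ => if e % 3 = 0 then x^e else 0) ∘ (fun k => 3*k))
          = fun k : ℕ => (x^3)^k := by
        funext k
        simp [Function.comp, Nat.mul_mod_right, pow_mul]
      rw [heq]; exact hgg
    · intro e he
      have h0 : e % 3 ≠ 0 := by
        intro h
        exact he ⟨e / 3, by show 3 * (e/3) = e; omega⟩
      simp [h0]
  have hg2 : HasSum (fun e : ℕ => if e % 3 = 1 then -x^e else 0) (-x * (1-x^3)⁻¹) := by
    have hinj : Function.Injective (fun k : ℕ => 3*k+1) := fun a b h => by dsimp only at h; omega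
    rw [← Function.Injective.hasSum_iff hinj ?_]
    · have heq : ((fun e : ℕ => if e % 3 = 1 then -x^e else 0) ∘ (fun k => 3*k+1))
          = fun k : ℕ => -x * (x^3)^k := by
        funext k
        have h1 : (3*k+1) % 3 = 1 := by omega
        simp only [Function.comp, h1, if_pos]
        rw [pow_add, pow_mul, pow_one]; ring
      rw [heq]; exact hgg.mul_left (-x)
    · intro e he
      have h0 : e % 3 ≠ 1 := by
        intro h
        exact he ⟨e / 3, by show 3 * (e/3) + 1 = e; omega⟩
      simp [h0]
  have hS3 : HasSum (fun e : ℕ => tauC e * x^e) ((1-x^3)⁻¹ + -x * (1-x^3)⁻¹) := by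
    have heq : (fun e : ℕ => tauC e * x^e)
        = fun e : ℕ => (if e % 3 = 0 then x^e else 0) + (if e % 3 = 1 then -x^e else 0) := by
      funext e
      unfold tauC
      by_cases h0 : e % 3 = 0
      · simp [h0]
      · by_cases h1 : e % 3 = 1 <;> simp [h0, h1]
    rw [heq]; exact hg1.add hg2
  have hS4 : HasSum (fun e : ℕ => x^e) (1-x)⁻¹ := hasSum_geometric_of_norm_lt_one hx
  -- combined sum
  have htot := (((hS1.mul_left ((1-y)^2/6)).add (hS2.mul_left ((1-y^2)/4))).add
      (hS3.mul_left ((1+y+y^2)/3))).add (hS4.mul_left ((1-y) * (1/(p:ℂ))))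
  have hfun : (fun e : ℕ => (f0C e p + f1C e p * y + f2C e p * y ^ 2) * x ^ e)
      = fun e : ℕ => (1-y)^2/6 * (((e:ℂ)+1) * x^e) + (1-y^2)/4 * (x^e + (-x)^e)
        + (1+y+y^2)/3 * (tauC e * x^e) + (1-y) * (1/(p:ℂ)) * x^e := by
    funext e; exact decompC p x y e
  have hval : (1-y)^2/6 * (x/(1-x)^2 + (1-x)⁻¹) + (1-y^2)/4 * ((1-x)⁻¹ + (1-(-x))⁻¹)
        + (1+y+y^2)/3 * ((1-x^3)⁻¹ + -x * (1-x^3)⁻¹) + (1-y) * (1/(p:ℂ)) * (1-x)⁻¹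
      = 1/6 * ((1 - y)^2 / (1 - x)^2) + 1/2 * ((1 - y^2) / (1 - x^2))
        + 1/3 * ((1 + y + y^2) / (1 + x + x^2)) + 1/(p : ℂ) * ((1 - y) / (1 - x)) := by
    have hmx : (1:ℂ) - -x = 1 + x := by ring
    have hfac3 : (1:ℂ) - x^3 = (1-x)*(1+x+x^2) := by ring
    have hfac2 : (1:ℂ) - x^2 = (1-x)*(1+x) := by ring
    have t1 : x/(1-x)^2 + (1-x)⁻¹ = 1/(1-x)^2 := by
      field_simp
      ring
    have t2 : (1-x)⁻¹ + (1+x)⁻¹ = 2/(1-x^2) := by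
      rw [hfac2]
      field_simp
      ring
    have t3 : (1-x^3)⁻¹ + -x * (1-x^3)⁻¹ = 1/(1+x+x^2) := by
      have h : (1-x^3)⁻¹ + -x * (1-x^3)⁻¹ = (1-x) * (1-x^3)⁻¹ := by ring
      rw [h, hfac3, mul_inv, ← mul_assoc, mul_inv_cancel₀ h1x, one_mul, one_div]
    rw [hmx, t1, t2, t3]
    ring
  have hHasSum : HasSum (fun e : ℕ => (f0C e p + f1C e p * y + f2C e p * y ^ 2) * x ^ e)
      (1/6 * ((1 - y)^2 / (1 - x)^2) + 1/2 * ((1 - y^2) / (1 - x^2))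
        + 1/3 * ((1 + y + y^2) / (1 + x + x^2)) + 1/(p : ℂ) * ((1 - y) / (1 - x))) := by
    rw [hfun, ← hval]; exact htot
  refine ⟨?_, hHasSum⟩
  -- summability of norms
  have hxr : ‖(‖x‖)‖ < 1 := by rwa [norm_norm]
  have hgeo : Summable (fun e : ℕ => ‖x‖^e) :=
    (hasSum_geometric_of_norm_lt_one hxr).summable
  have hAr : Summable (fun e : ℕ => ((e:ℝ)+1) * ‖x‖^e) := by
    have h := ((hasSum_coe_mul_geometric_of_norm_lt_one hxr).summable).add hgeo
    exact h.congr fun e => by ring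
  have hbig : Summable (fun e : ℕ =>
      ‖(1-y)^2/6‖ * (((e:ℝ)+1) * ‖x‖^e) + ‖(1-y^2)/4‖ * (2 * ‖x‖^e)
        + ‖(1+y+y^2)/3‖ * ‖x‖^e + ‖(1-y) * (1/(p:ℂ))‖ * ‖x‖^e) :=
    (((hAr.mul_left _).add ((hgeo.mul_left 2).mul_left _)).add (hgeo.mul_left _)).add
      (hgeo.mul_left _)
  refine Summable.of_nonneg_of_le (fun e => norm_nonneg _) (fun e => ?_) hbig
  rw [decompC p x y e]
  have e1 : ‖(1-y)^2/6 * (((e:ℂ)+1) * x^e)‖ = ‖(1-y)^2/6‖ * (((e:ℝ)+1) * ‖x‖^e) := by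
    rw [norm_mul, norm_mul, norm_pow]
    congr 2
    have h : ((e:ℂ)+1) = ((e+1 : ℕ) : ℂ) := by push_cast; ring
    rw [h, Complex.norm_natCast]; push_cast; ring
  have e2 : ‖(1-y^2)/4 * (x^e + (-x)^e)‖ ≤ ‖(1-y^2)/4‖ * (2 * ‖x‖^e) := by
    rw [norm_mul]
    refine mul_le_mul_of_nonneg_left ?_ (norm_nonneg _)
    calc ‖x^e + (-x)^e‖ ≤ ‖x^e‖ + ‖(-x)^e‖ := norm_add_le _ _
      _ = 2 * ‖x‖^e := by rw [norm_pow, norm_pow, norm_neg]; ring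
  have e3 : ‖(1+y+y^2)/3 * (tauC e * x^e)‖ ≤ ‖(1+y+y^2)/3‖ * ‖x‖^e := by
    rw [norm_mul, norm_mul, norm_pow]
    refine mul_le_mul_of_nonneg_left ?_ (norm_nonneg _)
    calc ‖tauC e‖ * ‖x‖^e ≤ 1 * ‖x‖^e :=
          mul_le_mul_of_nonneg_right (norm_tauC_le e) (by positivity)
      _ = ‖x‖^e := one_mul _
  have e4 : ‖(1-y) * (1/(p:ℂ)) * x^e‖ = ‖(1-y) * (1/(p:ℂ))‖ * ‖x‖^e := by
    rw [norm_mul, norm_pow]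
  refine le_trans (norm_add_le _ _) ?_
  refine add_le_add (le_trans (norm_add_le _ _)
    (add_le_add (le_trans (norm_add_le _ _) (add_le_add e1.le e2)) e3)) e4.le
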